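/- If all buyers have gross substitute valuations, then every vertex of the feasible region of the dual LP (in variables (u,p)) has integral coordinates; in particular, the set of Walrasian prices forms an integral polytope. -/

import Mathlib

/-!
At an extreme point `(u, p)` of the dual feasible region, `u` equals the total indirect utility
`∑ i, max_x (v i x - p ⬝ x)`, since otherwise `u` could be moved both ways. If some prices are
fractional, shift all of them by the same small `t`. Every demanded bundle stays locally optimal:
each local optimality condition compares an integer (a difference of values) with a price or with
a difference of two prices, and the shift cannot flip such a comparison. By discrete concavity the
bundle stays demanded, so moving `u` by `-t` times the number of fractional-price units bought
stays feasible for all small `t` of either sign, contradicting extremality. Hence `p` is integral,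
and then so is `u`.
-/

open Finset Function Filter Topology

theorem eq_zero_of_mem_extremePoints_of_eventually_add_smul_mem {E : Type*} [AddCommGroup E]
    [Module ℝ E] {A : Set E} {q w : E} (hq : q ∈ A.extremePoints ℝ)
    (h : ∀ᶠ t : ℝ in 𝓝 0, q + t • w ∈ A) : w = 0 := by
  obtain ⟨ε, hε, hball⟩ := Metric.eventually_nhds_iff.1 h
  have hδ : |ε / 2| < ε := by rw [abs_of_pos (half_pos hε)]; linarith
  have hplus : q + (ε / 2) • w ∈ A := hball (by rwa [Real.dist_0_eq_abs])
  have hminus : q - (ε / 2) • w ∈ A := by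
    simpa only [neg_smul, ← sub_eq_add_neg] using
      hball (y := -(ε / 2)) (by rwa [Real.dist_0_eq_abs, abs_neg])
  simpa [hε.ne'] using hq.2 hplus hminus (mem_openSegment_add_sub q _)

theorem le_add_of_le_of_abs_le {a r t : ℝ} (ha : a ≤ r) (ht : |t| ≤ |r - a|) : a ≤ r + t := by
  rw [abs_of_nonneg (sub_nonneg.2 ha)] at ht
  linarith [neg_abs_le t]

theorem add_le_of_le_of_abs_le {a r t : ℝ} (ha : r ≤ a) (ht : |t| ≤ |r - a|) : r + t ≤ a := by
  rw [abs_of_nonpos (sub_nonpos.2 ha)] at ht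
  linarith [le_abs_self t]

section Prices

variable {ι : Type*}

open Classical in
noncomputable def fracIndicator (p : ι → ℝ) (j : ι) : ℝ :=
  if ∃ z : ℤ, p j = z then 0 else 1

structure IntBoundsPreserved (p p' : ι → ℝ) : Prop where
  le : ∀ (A : ℤ) j, A ≤ p j → A ≤ p' j
  ge : ∀ (A : ℤ) j, p j ≤ A → p' j ≤ A
  le_sub : ∀ (A : ℤ) j k, A ≤ p j - p k → A ≤ p' j - p' k

theorem intBoundsPreserved_add_smul_fracIndicator {p : ι → ℝ} {t : ℝ}
    (ht : ∀ j, (¬∃ z : ℤ, p j = z) → ∀ z : ℤ, |t| ≤ |p j - z|) :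
    IntBoundsPreserved p (p + t • fracIndicator p) := by
  set p' := p + t • fracIndicator p
  have of_int {j} (hj : ∃ z : ℤ, p j = z) : p' j = p j := by simp [p', fracIndicator, hj]
  have of_frac {j} (hj : ¬∃ z : ℤ, p j = z) : p' j = p j + t := by
    simp [p', fracIndicator, hj]
  have le (A : ℤ) j (hA : A ≤ p j) : A ≤ p' j := by
    by_cases hj : ∃ z : ℤ, p j = z
    · rwa [of_int hj]
    · rw [of_frac hj]; exact le_add_of_le_of_abs_le hA (ht j hj A)
  have ge (A : ℤ) j (hA : p j ≤ A) : p' j ≤ A := by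
    by_cases hj : ∃ z : ℤ, p j = z
    · rwa [of_int hj]
    · rw [of_frac hj]; exact add_le_of_le_of_abs_le hA (ht j hj A)
  refine ⟨le, ge, fun A j k hA => ?_⟩
  by_cases hj : ∃ z : ℤ, p j = z <;> by_cases hk : ∃ z : ℤ, p k = z
  · rwa [of_int hj, of_int hk]
  · obtain ⟨zj, hzj⟩ := hj
    have := ge (zj - A) k (by push_cast; linarith)
    rw [of_int ⟨zj, hzj⟩]; push_cast at this; linarith
  · obtain ⟨zk, hzk⟩ := hk
    have := le (A + zk) j (by push_cast; linarith)
    rw [of_int ⟨zk, hzk⟩]; push_cast at this; linarith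
  · rw [of_frac hj, of_frac hk]; linarith

theorem eventually_abs_le_abs_sub_intCast [Finite ι] (p : ι → ℝ) :
    ∀ᶠ t : ℝ in 𝓝 0, ∀ j, (¬∃ z : ℤ, p j = z) → ∀ z : ℤ, |t| ≤ |p j - z| := by
  refine eventually_all.2 fun j => ?_
  by_cases hj : ∃ z : ℤ, p j = z
  · exact .of_forall fun _ h => absurd hj h
  · have hpos : 0 < |p j - round (p j)| := abs_pos.2 (sub_ne_zero.2 fun h => hj ⟨_, h⟩)
    filter_upwards [Metric.ball_mem_nhds 0 hpos] with t ht _ z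
    rw [Metric.mem_ball, Real.dist_0_eq_abs] at ht
    exact ht.le.trans (round_le (p j) z)

end Prices

section LocalDemand

variable {ι : Type*} [DecidableEq ι]

def IsLocalDemand (s : ι → ℕ) (v : (ι → ℕ) → ℤ) (p : ι → ℝ) (x : ι → ℕ) : Prop :=
  x ≤ s ∧
  (∀ j, x j < s j → (v (update x j (x j + 1)) : ℝ) - p j ≤ v x) ∧
  (∀ k, 0 < x k → (v (update x k (x k - 1)) : ℝ) + p k ≤ v x) ∧
  (∀ j k, j ≠ k → x j < s j → 0 < x k →
    (v (update (update x j (x j + 1)) k (x k - 1)) : ℝ) - p j + p k ≤ v x)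

theorem IsLocalDemand.of_intBoundsPreserved {s : ι → ℕ} {v : (ι → ℕ) → ℤ} {p p' : ι → ℝ}
    {x : ι → ℕ} (hx : IsLocalDemand s v p x)
    (hp : IntBoundsPreserved p p') : IsLocalDemand s v p' x := by
  obtain ⟨hxs, hadd, hrem, hswap⟩ := hx
  refine ⟨hxs, fun j hj => ?_, fun k hk => ?_, fun j k hjk hj hk => ?_⟩
  · have := hp.le (v (update x j (x j + 1)) - v x) j (by push_cast; linarith [hadd j hj])
    push_cast at this
    linarith
  · have := hp.ge (v x - v (update x k (x k - 1))) k (by push_cast; linarith [hrem k hk])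
    push_cast at this
    linarith
  · have := hp.le_sub (v (update (update x j (x j + 1)) k (x k - 1)) - v x) j k
      (by push_cast; linarith [hswap j k hjk hj hk])
    push_cast at this
    linarith

end LocalDemand

section Demand

variable {ι : Type*} [Fintype ι]

def surplus (v : (ι → ℕ) → ℤ) (p : ι → ℝ) (x : ι → ℕ) : ℝ :=
  v x - ∑ j, p j * x j

def IsDemand (s : ι → ℕ) (v : (ι → ℕ) → ℤ) (p : ι → ℝ) (x : ι → ℕ) : Prop :=
  x ≤ s ∧ ∀ y ≤ s, surplus v p y ≤ surplus v p x

theorem surplus_add_smul (v : (ι → ℕ) → ℤ) (p d : ι → ℝ) (t : ℝ) (x : ι → ℕ) :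
    surplus v (p + t • d) x = surplus v p x - t * ∑ j, d j * x j := by
  simp only [surplus, Pi.add_apply, Pi.smul_apply, smul_eq_mul, add_mul, sum_add_distrib,
    mul_sum, mul_assoc]
  ring

variable [DecidableEq ι]

theorem exists_isDemand (s : ι → ℕ) (v : (ι → ℕ) → ℤ) (p : ι → ℝ) : ∃ x, IsDemand s v p x := by
  simpa [IsDemand] using
    Set.exists_max_image (Set.Iic s) (surplus v p) (Set.finite_Iic s) Set.nonempty_Iic

def IsDiscreteConcave (s : ι → ℕ) (v : (ι → ℕ) → ℤ) : Prop :=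
  ∀ p x, IsLocalDemand s v p x → IsDemand s v p x

theorem sum_mul_update (p : ι → ℝ) (x : ι → ℕ) (j : ι) (a : ℕ) :
    ∑ k, p k * (update x j a k : ℝ) = ∑ k, p k * x k + p j * (a - x j) := by
  rw [← sub_eq_iff_eq_add', ← Finset.sum_sub_distrib, Finset.sum_eq_single j]
  · simp [mul_sub]
  · intro k _ hk; simp [hk]
  · simp

variable {s : ι → ℕ} {v : (ι → ℕ) → ℤ} {p : ι → ℝ} {x : ι → ℕ}

theorem IsDemand.isLocalDemand (hx : IsDemand s v p x) : IsLocalDemand s v p x := by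
  obtain ⟨hxs, hmax⟩ := hx
  have update_le {y : ι → ℕ} (hy : y ≤ s) (j : ι) {a : ℕ} (ha : a ≤ s j) : update y j a ≤ s :=
    update_le_iff.2 ⟨ha, fun k _ => hy k⟩
  refine ⟨hxs, fun j hj => ?_, fun k hk => ?_, fun j k hjk hj hk => ?_⟩
  · have := hmax (update x j (x j + 1)) (update_le hxs j hj)
    simp only [surplus, sum_mul_update] at this
    push_cast at this
    linarith
  · have := hmax (update x k (x k - 1)) (update_le hxs k ((Nat.sub_le _ _).trans (hxs k)))
    simp only [surplus, sum_mul_update, Nat.cast_pred hk] at this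
    linarith
  · have hxk : update x j (x j + 1) k = x k := update_of_ne hjk.symm _ _
    have := hmax (update (update x j (x j + 1)) k (x k - 1))
      (update_le (update_le hxs j hj) k ((Nat.sub_le _ _).trans (hxs k)))
    simp only [surplus, sum_mul_update, hxk, Nat.cast_pred hk] at this
    push_cast at this
    linarith

theorem IsDemand.add_smul_fracIndicator (hv : IsDiscreteConcave s v) (hx : IsDemand s v p x)
    {t : ℝ} (ht : ∀ j, (¬∃ z : ℤ, p j = z) → ∀ z : ℤ, |t| ≤ |p j - z|) :
    IsDemand s v (p + t • fracIndicator p) x :=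
  hv _ _ (hx.isLocalDemand.of_intBoundsPreserved (intBoundsPreserved_add_smul_fracIndicator ht))

end Demand

section Dual

variable {ι β : Type*} [Fintype ι] [Fintype β] {s : ι → ℕ} {v : β → (ι → ℕ) → ℤ} {u : ℝ}
  {p : ι → ℝ}

def dualFeasible (s : ι → ℕ) (v : β → (ι → ℕ) → ℤ) : Set (ℝ × (ι → ℝ)) :=
  {q | ∀ x : β → ι → ℕ, (∀ i, x i ≤ s) → ∑ i, surplus (v i) q.2 (x i) ≤ q.1}

theorem mem_dualFeasible_iff {x : β → ι → ℕ} (hx : ∀ i, IsDemand s (v i) p (x i)) (u : ℝ) :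
    (u, p) ∈ dualFeasible s v ↔ ∑ i, surplus (v i) p (x i) ≤ u :=
  ⟨fun h => h x fun i => (hx i).1,
    fun h y hy => (sum_le_sum fun i _ => (hx i).2 (y i) (hy i)).trans h⟩

theorem fst_eq_sum_surplus_of_mem_extremePoints {x : β → ι → ℕ}
    (hx : ∀ i, IsDemand s (v i) p (x i)) (hq : (u, p) ∈ (dualFeasible s v).extremePoints ℝ) :
    u = ∑ i, surplus (v i) p (x i) := by
  have hle := (mem_dualFeasible_iff hx u).1 hq.1
  refine (eq_of_le_of_not_lt hle fun hlt => ?_).symm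
  have hup : ∀ᶠ t : ℝ in 𝓝 0, (u, p) + t • ((1 : ℝ), (0 : ι → ℝ)) ∈ dualFeasible s v := by
    filter_upwards [eventually_gt_nhds (sub_neg.2 hlt)] with t ht
    have hshift : (u, p) + t • ((1 : ℝ), (0 : ι → ℝ)) = (u + t, p) := by simp
    rw [hshift, mem_dualFeasible_iff hx]
    linarith
  simpa using eq_zero_of_mem_extremePoints_of_eventually_add_smul_mem hq hup

theorem exists_intCast_eq_price_of_mem_extremePoints [DecidableEq ι]
    (hv : ∀ i, IsDiscreteConcave s (v i)) (hq : (u, p) ∈ (dualFeasible s v).extremePoints ℝ)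
    (j : ι) : ∃ z : ℤ, p j = z := by
  choose x hx using fun i => exists_isDemand s (v i) p
  set d := fracIndicator p
  set S := ∑ i, ∑ k, d k * x i k
  have hline : ∀ᶠ t : ℝ in 𝓝 0, (u, p) + t • (-S, d) ∈ dualFeasible s v := by
    filter_upwards [eventually_abs_le_abs_sub_intCast p] with t ht
    have hxt i : IsDemand s (v i) (p + t • d) (x i) := (hx i).add_smul_fracIndicator (hv i) ht
    have hshift : (u, p) + t • (-S, d) = (u - t * S, p + t • d) := by simp [sub_eq_add_neg]
    rw [hshift, mem_dualFeasible_iff hxt]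
    simp only [surplus_add_smul, sum_sub_distrib, S, mul_sum]
    linarith [(mem_dualFeasible_iff hx u).1 hq.1]
  have hd : d = 0 :=
    congrArg Prod.snd (eq_zero_of_mem_extremePoints_of_eventually_add_smul_mem hq hline)
  by_contra hj
  simpa [d, fracIndicator, hj] using congrFun hd j

end Dual

/-- If all buyers have (multi-unit) gross substitute valuations — formalized via discrete
concavity: local optimality under single-unit additions, removals and swaps implies
global optimality of a demanded bundle — then every extreme point `(u, p)` of the
feasible region of the dual LP has integral coordinates; in particular the set of
Walrasian prices forms an integral polytope. -/
theorem gs_dual_LP_vertices_integral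
    (m n : ℕ) (s : Fin n → ℕ)
    (v : Fin m → (Fin n → ℕ) → ℤ)
    (hDC : ∀ (i : Fin m) (p : Fin n → ℝ) (x : Fin n → ℕ), (∀ j, x j ≤ s j) →
      (∀ j, x j < s j →
        (v i (Function.update x j (x j + 1)) : ℝ) - p j ≤ (v i x : ℝ)) →
      (∀ k, 0 < x k →
        (v i (Function.update x k (x k - 1)) : ℝ) + p k ≤ (v i x : ℝ)) →
      (∀ j k, j ≠ k → x j < s j → 0 < x k →
        (v i (Function.update (Function.update x j (x j + 1)) k (x k - 1)) : ℝ)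
          - p j + p k ≤ (v i x : ℝ)) →
      ∀ y : Fin n → ℕ, (∀ j, y j ≤ s j) →
        (v i y : ℝ) - ∑ j, p j * (y j : ℝ) ≤ (v i x : ℝ) - ∑ j, p j * (x j : ℝ)) :
    let Feas : Set (ℝ × (Fin n → ℝ)) := {q | ∀ x : Fin m → Fin n → ℕ,
      (∀ i j, x i j ≤ s j) →
      ∑ i, ((v i (x i) : ℝ) - ∑ j, q.2 j * (x i j : ℝ)) ≤ q.1}
    ∀ q ∈ Feas.extremePoints ℝ, (∃ z : ℤ, q.1 = (z : ℝ)) ∧ ∀ j, ∃ z : ℤ, q.2 j = (z : ℝ) := by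
  have hv i : IsDiscreteConcave s (v i) := fun p x ⟨hxs, hadd, hrem, hswap⟩ =>
    ⟨hxs, hDC i p x hxs hadd hrem hswap⟩
  show ∀ q ∈ (dualFeasible s v).extremePoints ℝ, (∃ z : ℤ, q.1 = z) ∧ ∀ j, ∃ z : ℤ, q.2 j = z
  rintro ⟨u, p⟩ hq
  choose z hz using exists_intCast_eq_price_of_mem_extremePoints hv hq
  choose x hx using fun i => exists_isDemand s (v i) p
  refine ⟨⟨∑ i, (v i (x i) - ∑ j, z j * x i j), ?_⟩, fun j => ⟨z j, hz j⟩⟩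
  rw [fst_eq_sum_surplus_of_mem_extremePoints hx hq]
  simp [surplus, hz]
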